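/- Let Γ be a countably infinite group with a finite symmetric generating set S and Cayley graph 𝒢, and let H be a subgroup of Γ. Suppose that every sequence (φ_n) of normalized positive definite functions φ_n : Γ → [0,1] converging pointwise to 1 converges to 1 uniformly on H (a characterization of relative property (T) for the pair (Γ,H)). Then there exists a threshold α* < 1 such that for every Γ-invariant bond percolation P on 𝒢 with E[deg_ω(o)] > α*·deg(o), one has inf_{h ∈ H} τ(g, gh) > 0 for every g ∈ Γ. -/

import Mathlib

open MeasureTheory Filter
open scoped ComplexOrder symmDiff

namespace InvPerc

variable {Γ : Type*} [Group Γ]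

/-- Percolation configurations: indicator functions on unordered pairs of vertices. -/
abbrev Config (Γ : Type*) := Sym2 Γ → Bool

/-- The edge set of the (right) Cayley graph of `Γ` with respect to `S`. -/
def IsCayleyEdge (S : Finset Γ) (e : Sym2 Γ) : Prop :=
  ∃ g : Γ, ∃ t ∈ S, e = s(g, g * t)

/-- The action of `Γ` on configurations induced by left multiplication:
`e ∈ shift γ ω ↔ γ⁻¹ • e ∈ ω`. -/
def shift (γ : Γ) (ω : Config Γ) : Config Γ :=
  fun e => ω (Sym2.map (fun x => γ⁻¹ * x) e)

/-- `ConnBy ω u v n` : `u` and `v` are joined by a path of at most `n` open edges of `ω`. -/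
def ConnBy (ω : Config Γ) (u v : Γ) (n : ℕ) : Prop :=
  ∃ l : List Γ, l.length ≤ n ∧ List.Chain (fun a b => ω s(a, b) = true) u l ∧
    (u :: l).getLast (List.cons_ne_nil u l) = v

/-- `u` and `v` lie in the same cluster of the configuration `ω` (`u ↔ v` in `ω`). -/
def Conn (ω : Config Γ) (u v : Γ) : Prop := ∃ n : ℕ, ConnBy ω u v n

/-- The two-point function `τ(u,v) = P[u ↔ v]`. -/
noncomputable def tpf (P : Measure (Config Γ)) (u v : Γ) : ℝ :=
  (P {ω | Conn ω u v}).toReal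

/-- A `Γ`-invariant bond percolation on the Cayley graph of `(Γ, S)`: a probability
measure on configurations, supported on subsets of the Cayley edge set, invariant under
the action induced by left multiplication. -/
structure IsInvBondPerc (S : Finset Γ) (P : Measure (Config Γ)) : Prop where
  prob : IsProbabilityMeasure P
  supported : P {ω | ∀ e : Sym2 Γ, ω e = true → IsCayleyEdge S e} = 1
  invariant : ∀ γ : Γ, P.map (shift γ) = P

/-- The expected degree of the origin, `E[deg_ω(o)] = ∑_{t ∈ S} P[{o, t} ∈ ω]`. -/
noncomputable def expDeg (S : Finset Γ) (P : Measure (Config Γ)) : ℝ :=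
  ∑ t ∈ S, (P {ω : Config Γ | ω s(1, t) = true}).toReal

/-- The word length of `g` with respect to the generating set `S`. -/
noncomputable def wlen (S : Finset Γ) (g : Γ) : ℕ :=
  sInf {n : ℕ | ∃ l : List Γ, (∀ x ∈ l, x ∈ S) ∧ l.prod = g ∧ l.length = n}

/-- The word metric `d(g,h) = |g⁻¹h|`. -/
noncomputable def wdist (S : Finset Γ) (g h : Γ) : ℕ := wlen S (g⁻¹ * h)

/-- The two-point function of `P` vanishes at infinity:
`sup {τ(g,h) : d(g,h) > r} → 0` as `r → ∞`. -/
def TpfVanishes (S : Finset Γ) (P : Measure (Config Γ)) : Prop :=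
  ∀ ε : ℝ, 0 < ε → ∃ r : ℕ, ∀ g h : Γ, r < wdist S g h → tpf P g h < ε

/-- `S` is a finite symmetric generating set not containing the identity. -/
def IsSymmGen (S : Finset Γ) : Prop :=
  (1 : Γ) ∉ S ∧ (∀ t ∈ S, t⁻¹ ∈ S) ∧
    ∀ g : Γ, ∃ l : List Γ, (∀ x ∈ l, x ∈ S) ∧ l.prod = g

/-- A positive definite function on `Γ`. -/
def IsPosDef (φ : Γ → ℂ) : Prop :=
  ∀ (n : ℕ) (g : Fin n → Γ) (a : Fin n → ℂ),
    0 ≤ ∑ i : Fin n, ∑ j : Fin n, (starRingEnd ℂ) (a i) * a j * φ ((g i)⁻¹ * g j)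

/-- A conditionally negative definite function on `Γ`. -/
def IsCondNegDef (ψ : Γ → ℝ) : Prop :=
  ψ 1 = 0 ∧ (∀ g : Γ, ψ g⁻¹ = ψ g) ∧
    ∀ (n : ℕ) (g : Fin n → Γ) (a : Fin n → ℝ), (∑ i : Fin n, a i) = 0 →
      ∑ i : Fin n, ∑ j : Fin n, a i * a j * ψ ((g i)⁻¹ * g j) ≤ 0

end InvPerc

/-!
If no threshold worked, there would be invariant percolations `Pₙ` with
`E[deg_ω(o)] > (1 - 1/(n+1))·deg(o)` whose two-point function is not bounded below on some
coset `gₙH`. The functions `φₙ = τₙ(1, ·)` take values in `[0,1]` and are positive definite,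
because `τ(g,h) = E[1{g ↔ h}]` and `↔` is an equivalence relation. They tend to `1` pointwise:
if `g` is a word of length `k` in `S`, a union bound along the corresponding path gives
`1 - τₙ(1,g) ≤ k·(deg(o) - E[deg_ω(o)])`. Relative property (T) then gives `φₙ > 1/2` on `H` for
large `n`, while invariance gives `τₙ(gₙ, gₙh) = φₙ(h)`, a contradiction.
-/

theorem MeasureTheory.measureReal_add_measureReal_sub_one_le {α : Type*} [MeasurableSpace α]
    {μ : Measure α} [IsProbabilityMeasure μ] {s t u : Set α} (ht : MeasurableSet t)
    (h : s ∩ t ⊆ u) : μ.real s + μ.real t - 1 ≤ μ.real u := by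
  have := measureReal_union_add_inter (μ := μ) (s := s) ht
  linarith [measureReal_le_one (μ := μ) (s := s ∪ t), measureReal_mono (μ := μ) h]

theorem Equivalence.sum_starRingEnd_mul_mul_ite_nonneg {ι : Type*} [Fintype ι]
    {r : ι → ι → Prop} [DecidableRel r] (hr : Equivalence r) (a : ι → ℂ) :
    0 ≤ ∑ i, ∑ j, starRingEnd ℂ (a i) * a j * (if r i j then 1 else 0) := by
  classical
  have := Fintype.ofFinite (Quot r)
  -- `1[r i j] = ∑ q, 1[i ∈ q] * 1[j ∈ q]` over the classes `q`, so the form is `∑ q, |T q|²`.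
  let T : Quot r → ℂ := fun q => ∑ j with Quot.mk r j = q, a j
  have hrow : ∀ i, ∑ j, starRingEnd ℂ (a i) * a j * (if r i j then 1 else 0)
      = starRingEnd ℂ (a i) * T (Quot.mk r i) := by
    intro i
    simp only [T, Finset.sum_filter, Finset.mul_sum, hr.quot_mk_eq_iff]
    refine Finset.sum_congr rfl fun j _ => ?_
    by_cases h : r i j
    · simp [h, hr.symm h]
    · have h' : ¬r j i := fun h' => h (hr.symm h')
      simp [h, h']
  calc 0 ≤ ∑ q, starRingEnd ℂ (T q) * T q :=
        Finset.sum_nonneg fun q _ => star_mul_self_nonneg (T q)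
    _ = ∑ q, ∑ i with Quot.mk r i = q, starRingEnd ℂ (a i) * T (Quot.mk r i) := by
        refine Finset.sum_congr rfl fun q _ => ?_
        simp only [T, map_sum, Finset.sum_mul]
        exact Finset.sum_congr rfl fun i hi => by rw [(Finset.mem_filter.1 hi).2]
    _ = ∑ i, ∑ j, starRingEnd ℂ (a i) * a j * (if r i j then 1 else 0) :=
        (Finset.sum_fiberwise _ (Quot.mk r) _).trans
          (Finset.sum_congr rfl fun i _ => (hrow i).symm)

namespace InvPerc

section Connectivity

variable {Γ : Type*}

theorem conn_iff_reflTransGen {ω : Config Γ} {u v : Γ} :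
    Conn ω u v ↔ Relation.ReflTransGen (fun a b => ω s(a, b) = true) u v := by
  constructor
  · rintro ⟨-, l, -, hchain, hlast⟩
    exact List.relationReflTransGen_of_exists_isChain_cons l hchain hlast
  · intro h
    obtain ⟨l, hchain, hlast⟩ := List.exists_isChain_cons_of_relationReflTransGen h
    exact ⟨l.length, l, le_rfl, hchain, hlast⟩

theorem conn_equivalence (ω : Config Γ) : Equivalence (Conn ω) where
  refl _ := conn_iff_reflTransGen.2 .refl
  symm h := conn_iff_reflTransGen.2 <| Relation.ReflTransGen.mono
    (fun a b hab => by rwa [Sym2.eq_swap]) _ _ (.swap _ _ (conn_iff_reflTransGen.1 h))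
  trans h₁ h₂ := conn_iff_reflTransGen.2 <|
    (conn_iff_reflTransGen.1 h₁).trans (conn_iff_reflTransGen.1 h₂)

theorem conn_of_edge {ω : Config Γ} {u v : Γ} (h : ω s(u, v) = true) : Conn ω u v :=
  conn_iff_reflTransGen.2 (.single h)

theorem conn_shift_iff [Group Γ] {γ : Γ} {ω : Config Γ} {u v : Γ} :
    Conn (shift γ ω) (γ * u) (γ * v) ↔ Conn ω u v := by
  simp only [conn_iff_reflTransGen]
  constructor
  · intro h
    simpa [Function.onFun] using Relation.ReflTransGen.lift
      (p := fun a b => ω s(a, b) = true) (γ⁻¹ * ·) (fun _ _ hab => hab) _ _ h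
  · exact Relation.ReflTransGen.lift (p := fun a b => shift γ ω s(a, b) = true) (γ * ·)
      (fun _ _ hab => by simpa [Function.onFun, shift] using hab) _ _

end Connectivity

section Measurability

variable {Γ : Type*}

theorem measurableSet_edge (e : Sym2 Γ) : MeasurableSet {ω : Config Γ | ω e = true} :=
  measurableSet_eq_fun (measurable_pi_apply e) measurable_const

theorem measurable_isChain_cons (u : Γ) (l : List Γ) :
    Measurable fun ω : Config Γ => List.IsChain (fun a b => ω s(a, b) = true) (u :: l) := by
  induction l generalizing u with
  | nil => simp
  | cons b l ih =>
    simp only [List.isChain_cons_cons]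
    exact (measurableSet_setOfPred.1 (measurableSet_edge _)).and (ih b)

theorem measurableSet_conn [Countable Γ] (u v : Γ) :
    MeasurableSet {ω : Config Γ | Conn ω u v} :=
  measurableSet_setOfPred.2 <| .exists fun _ => .exists fun l =>
    measurable_const.and ((measurable_isChain_cons u l).and measurable_const)

theorem measurable_shift [Group Γ] (γ : Γ) : Measurable (shift γ : Config Γ → Config Γ) :=
  measurable_pi_lambda _ fun _ => measurable_pi_apply _

end Measurability

section TwoPoint

variable {Γ : Type*} {P : Measure (Config Γ)}

theorem tpf_le_one [IsProbabilityMeasure P] (u v : Γ) : tpf P u v ≤ 1 :=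
  measureReal_le_one

theorem tpf_self [IsProbabilityMeasure P] (u : Γ) : tpf P u u = 1 := by
  simp [tpf, (conn_equivalence _).refl]

theorem measureReal_edge_le_tpf [IsFiniteMeasure P] (u v : Γ) :
    P.real {ω | ω s(u, v) = true} ≤ tpf P u v :=
  measureReal_mono fun _ => conn_of_edge

theorem tpf_add_tpf_sub_one_le [Countable Γ] [IsProbabilityMeasure P] (u v w : Γ) :
    tpf P u v + tpf P v w - 1 ≤ tpf P u w :=
  measureReal_add_measureReal_sub_one_le (measurableSet_conn v w)
    fun _ h => (conn_equivalence _).trans h.1 h.2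

theorem expDeg_le_card [Group Γ] [IsProbabilityMeasure P] (S : Finset Γ) :
    expDeg S P ≤ S.card := by
  simpa [expDeg, measureReal_def] using
    Finset.sum_le_card_nsmul S _ 1 fun _ _ => measureReal_le_one

end TwoPoint

section Invariance

variable {Γ : Type*} [Group Γ] {S : Finset Γ} {P : Measure (Config Γ)}

theorem IsInvBondPerc.measure_preimage_shift (hP : IsInvBondPerc S P) (γ : Γ)
    {A : Set (Config Γ)} (hA : MeasurableSet A) : P (shift γ ⁻¹' A) = P A := by
  rw [← Measure.map_apply (measurable_shift γ) hA, hP.invariant γ]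

theorem tpf_mul_left [Countable Γ] (hP : IsInvBondPerc S P) (γ u v : Γ) :
    tpf P (γ * u) (γ * v) = tpf P u v := by
  rw [tpf, ← hP.measure_preimage_shift γ (measurableSet_conn _ _)]
  simp only [Set.preimage_ofPred_eq, conn_shift_iff, tpf]

theorem one_sub_sum_le_tpf [Countable Γ] (hP : IsInvBondPerc S P) (l : List Γ) :
    1 - (l.map fun t => 1 - tpf P 1 t).sum ≤ tpf P 1 l.prod := by
  have := hP.prob
  induction l with
  | nil => simp [tpf_self]
  | cons t l ih =>
    calc 1 - (List.map (fun t => 1 - tpf P 1 t) (t :: l)).sum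
        ≤ tpf P 1 t + tpf P (t * 1) (t * l.prod) - 1 := by
          rw [tpf_mul_left hP]
          simp only [List.map_cons, List.sum_cons]
          linarith
      _ ≤ tpf P 1 (t :: l).prod := by
          simpa using tpf_add_tpf_sub_one_le 1 t (t * l.prod)

theorem one_sub_tpf_le_card_sub_expDeg (hP : IsInvBondPerc S P) {t : Γ} (ht : t ∈ S) :
    1 - tpf P 1 t ≤ S.card - expDeg S P := by
  have := hP.prob
  calc 1 - tpf P 1 t ≤ 1 - P.real {ω | ω s(1, t) = true} := by
        linarith [measureReal_edge_le_tpf (P := P) 1 t]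
    _ ≤ ∑ s ∈ S, (1 - P.real {ω | ω s(1, s) = true}) :=
        Finset.single_le_sum (f := fun s => 1 - P.real {ω | ω s(1, s) = true})
          (fun _ _ => sub_nonneg.2 measureReal_le_one) ht
    _ = S.card - expDeg S P := by
        simp [expDeg, Finset.sum_sub_distrib, measureReal_def]

theorem one_sub_length_mul_le_tpf [Countable Γ] (hP : IsInvBondPerc S P) {l : List Γ}
    (hl : ∀ x ∈ l, x ∈ S) : 1 - l.length * (S.card - expDeg S P) ≤ tpf P 1 l.prod := by
  refine le_trans ?_ (one_sub_sum_le_tpf hP l)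
  have := List.sum_le_card_nsmul (l.map fun t => 1 - tpf P 1 t) _ (by
    simpa using fun t ht => one_sub_tpf_le_card_sub_expDeg hP (hl t ht))
  simp only [List.length_map, nsmul_eq_mul] at this
  linarith

theorem tendsto_tpf_one_of_tendsto_expDeg [Countable Γ]
    (hgen : ∀ g : Γ, ∃ l : List Γ, (∀ x ∈ l, x ∈ S) ∧ l.prod = g)
    {P : ℕ → Measure (Config Γ)} (hP : ∀ n, IsInvBondPerc S (P n))
    (hdeg : Tendsto (fun n => expDeg S (P n)) atTop (nhds S.card)) (g : Γ) :
    Tendsto (fun n => tpf (P n) 1 g) atTop (nhds 1) := by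
  have := fun n => (hP n).prob
  obtain ⟨l, hl, rfl⟩ := hgen g
  have hlower : Tendsto (fun n => 1 - l.length * (S.card - expDeg S (P n))) atTop (nhds 1) := by
    simpa using (tendsto_const_nhds (x := (1 : ℝ))).sub <|
      (tendsto_const_nhds (x := (l.length : ℝ))).mul <|
        (tendsto_const_nhds (x := (S.card : ℝ))).sub hdeg
  exact tendsto_of_tendsto_of_tendsto_of_le_of_le hlower tendsto_const_nhds
    (fun n => one_sub_length_mul_le_tpf (hP n) hl) fun n => tpf_le_one _ _

theorem isPosDef_tpf [Countable Γ] (hP : IsInvBondPerc S P) :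
    IsPosDef fun g => (tpf P 1 g : ℂ) := by
  have := hP.prob
  intro n g a
  let K : Fin n → Fin n → Config Γ → ℂ := fun i j =>
    {ω | Conn ω (g i) (g j)}.indicator fun _ => 1
  have hK : ∀ i j, Integrable (K i j) P := fun i j =>
    (integrable_const 1).indicator (measurableSet_conn _ _)
  have hτ : ∀ i j, (tpf P 1 ((g i)⁻¹ * g j) : ℂ) = ∫ ω, K i j ω ∂P := by
    intro i j
    rw [← tpf_mul_left hP (g i), mul_one, mul_inv_cancel_left,
      integral_indicator_const _ (measurableSet_conn _ _)]
    simp [tpf, measureReal_def]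
  simp only [hτ, ← integral_const_mul]
  have hrow : ∀ i, ∑ j, ∫ ω, starRingEnd ℂ (a i) * a j * K i j ω ∂P
      = ∫ ω, ∑ j, starRingEnd ℂ (a i) * a j * K i j ω ∂P := fun i =>
    (integral_finsetSum _ fun j _ => (hK i j).const_mul _).symm
  rw [Finset.sum_congr rfl fun i _ => hrow i,
    ← integral_finsetSum _ fun i _ => integrable_finsetSum _ fun j _ => (hK i j).const_mul _]
  refine integral_nonneg fun ω => ?_
  classical
  simpa [K, Set.indicator_apply, Function.onFun] using
    ((conn_equivalence ω).comap g).sum_starRingEnd_mul_mul_ite_nonneg a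

end Invariance

theorem relativeT_implies_coset_threshold_general {Γ : Type*} [Group Γ] [Countable Γ]
    (S : Finset Γ) (hS : IsSymmGen S) (H : Subgroup Γ)
    (hrelT : ∀ φ : ℕ → Γ → ℝ,
      (∀ n : ℕ, (∀ g : Γ, 0 ≤ φ n g ∧ φ n g ≤ 1) ∧ φ n 1 = 1 ∧
        IsPosDef (fun g => (φ n g : ℂ))) →
      (∀ g : Γ, Tendsto (fun n => φ n g) atTop (nhds 1)) →
      ∀ ε : ℝ, 0 < ε → ∃ N : ℕ, ∀ n : ℕ, N ≤ n → ∀ h ∈ H, |1 - φ n h| < ε) :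
    ∃ αstar : ℝ, αstar < 1 ∧
      ∀ P : Measure (Config Γ), IsInvBondPerc S P →
        expDeg S P > αstar * (S.card : ℝ) →
        ∀ g : Γ, ∃ c : ℝ, 0 < c ∧ ∀ h ∈ H, c ≤ tpf P g (g * h) := by
  by_contra! hcon
  choose P hP hdeg g hfail using fun n : ℕ =>
    hcon (1 - 1 / (n + 1)) (sub_lt_self 1 Nat.one_div_pos_of_nat)
  have : ∀ n, IsProbabilityMeasure (P n) := fun n => (hP n).prob
  have hlim : Tendsto (fun n => expDeg S (P n)) atTop (nhds S.card) := by
    have hα : Tendsto (fun n : ℕ => (1 - 1 / ((n : ℝ) + 1)) * S.card) atTop (nhds S.card) := by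
      simpa using (tendsto_one_div_add_atTop_nhds_zero_nat.const_sub 1).mul_const (S.card : ℝ)
    exact tendsto_of_tendsto_of_tendsto_of_le_of_le hα tendsto_const_nhds
      (fun n => (hdeg n).le) fun n => expDeg_le_card S
  obtain ⟨N, hN⟩ := hrelT (fun n => tpf (P n) 1)
    (fun n => ⟨fun _ => ⟨measureReal_nonneg, tpf_le_one _ _⟩, tpf_self 1, isPosDef_tpf (hP n)⟩)
    (tendsto_tpf_one_of_tendsto_expDeg hS.2.2 hP hlim) (1 / 2) one_half_pos
  obtain ⟨h, hH, hsmall⟩ := hfail N (1 / 2) one_half_pos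
  have hcoset : tpf (P N) (g N) (g N * h) = tpf (P N) 1 h := by
    simpa using tpf_mul_left (hP N) (g N) 1 h
  linarith [abs_lt.1 (hN N le_rfl h hH)]

/-- if every sequence of normalized positive definite functions
`φₙ : Γ → [0,1]` converging pointwise to `1` converges to `1` uniformly on the subgroup `H`
(relative property (T) for `(Γ,H)`), then there is a threshold `α* < 1` such that every
`Γ`-invariant bond percolation with `E[deg_ω(o)] > α*·deg(o)` has two-point function bounded
away from zero on every left `H`-coset. -/
theorem relativeT_implies_coset_threshold {Γ : Type*} [Group Γ] [Countable Γ] [Infinite Γ]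
    (S : Finset Γ) (hS : IsSymmGen S) (H : Subgroup Γ)
    (hrelT : ∀ φ : ℕ → Γ → ℝ,
      (∀ n : ℕ, (∀ g : Γ, 0 ≤ φ n g ∧ φ n g ≤ 1) ∧ φ n 1 = 1 ∧
        IsPosDef (fun g => (φ n g : ℂ))) →
      (∀ g : Γ, Tendsto (fun n => φ n g) atTop (nhds 1)) →
      ∀ ε : ℝ, 0 < ε → ∃ N : ℕ, ∀ n : ℕ, N ≤ n → ∀ h ∈ H, |1 - φ n h| < ε) :
    ∃ αstar : ℝ, αstar < 1 ∧
      ∀ P : Measure (Config Γ), IsInvBondPerc S P →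
        expDeg S P > αstar * (S.card : ℝ) →
        ∀ g : Γ, ∃ c : ℝ, 0 < c ∧ ∀ h ∈ H, c ≤ tpf P g (g * h) :=
  relativeT_implies_coset_threshold_general S hS H hrelT

end InvPerc
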